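/- arXiv:2203.08582 — 8 statements merged into one kernel-verified Lean document; each statement's English description precedes it below -/
import Mathlib

section
/- The tensor A of order 4 and dimension 2 with entries a_{1112} = -2, a_{2111} = a_{2222} = 1 and all other entries zero is column sufficient but not column adequate. -/
open Finset Matrix

/-- For a tensor `A` of order `k+1` and dimension `n` (entries `A i f` with row index `i`
and remaining indices `f`), `tmul A x i = (A x^k)_i`. -/
def tmul {n k : ℕ} (A : Fin n → (Fin k → Fin n) → ℝ) (x : Fin n → ℝ) (i : Fin n) : ℝ :=
  ∑ f : Fin k → Fin n, A i f * ∏ j, x (f j)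

/-- A tensor is column adequate if `x_i (A x^{m-1})_i ≤ 0` for all `i` implies `A x^{m-1} = 0`. -/
def ColumnAdequate {n k : ℕ} (A : Fin n → (Fin k → Fin n) → ℝ) : Prop :=
  ∀ x : Fin n → ℝ, (∀ i, x i * tmul A x i ≤ 0) → ∀ i, tmul A x i = 0

def ColumnSufficient {n k : ℕ} (A : Fin n → (Fin k → Fin n) → ℝ) : Prop :=
  ∀ x : Fin n → ℝ, (∀ i, x i * tmul A x i ≤ 0) → ∀ i, x i * tmul A x i = 0

/-- The order-4 dimension-2 tensor with `a_{1112} = -2`, `a_{2111} = a_{2222} = 1`. -/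
noncomputable def exTensor2 : Fin 2 → (Fin 3 → Fin 2) → ℝ := fun i f =>
  if i = 0 ∧ f = ![0, 0, 1] then -2
  else if i = 1 ∧ f = ![0, 0, 0] then 1
  else if i = 1 ∧ f = ![1, 1, 1] then 1
  else 0

lemma tmul_exTensor2_zero (x : Fin 2 → ℝ) : tmul exTensor2 x 0 = -2 * x 0 ^ 2 * x 1 := by
  simp [tmul, exTensor2, Fin.prod_univ_three]
  ring

lemma tmul_exTensor2_one (x : Fin 2 → ℝ) : tmul exTensor2 x 1 = x 0 ^ 3 + x 1 ^ 3 := by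
  simp [tmul, exTensor2, Fin.prod_univ_three, Finset.sum_ite, Finset.filter_eq']
  ring

/-- The first sign condition gives `x₁³ x₂ ≥ 0`, so the second, `x₁³ x₂ + x₂⁴ ≤ 0`, forces
`x₂ = 0`, which kills both products. -/
lemma columnSufficient_exTensor2 : ColumnSufficient exTensor2 := by
  intro x hx
  have h0 := hx 0
  have h1 := hx 1
  rw [tmul_exTensor2_zero] at h0
  rw [tmul_exTensor2_one] at h1
  have hx1 : x 1 = 0 := by
    have : x 1 ^ 4 ≤ 0 := by nlinarith
    exact pow_eq_zero_iff (n := 4) (by norm_num) |>.mp (le_antisymm this (by positivity))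
  intro i
  fin_cases i <;> simp [tmul_exTensor2_zero, tmul_exTensor2_one, hx1]

/-- The witness is `x = (1, 0)`, where `A x³ = (0, 1)`. -/
lemma not_columnAdequate_exTensor2 : ¬ ColumnAdequate exTensor2 := by
  intro hA
  have hsign : ∀ i, ![(1 : ℝ), 0] i * tmul exTensor2 ![1, 0] i ≤ 0 := by
    intro i
    fin_cases i <;> simp [tmul_exTensor2_zero, tmul_exTensor2_one]
  simpa [tmul_exTensor2_one] using hA ![1, 0] hsign 1

/-- This tensor is column sufficient but not column adequate. -/
theorem exTensor2_column_sufficient_not_adequate :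
    ColumnSufficient exTensor2 ∧ ¬ ColumnAdequate exTensor2 :=
  ⟨columnSufficient_exTensor2, not_columnAdequate_exTensor2⟩
end

section
/- If A is a column adequate tensor of order m and dimension n, then every principal sub-tensor of A is column adequate. -/
open Finset Matrix

/-!
Extend `x ∈ ℝ^J` by zero to `y ∈ ℝ^n`. A monomial `∏ y_{f j}` vanishes as soon as one index
`f j` lies outside `J`, so `(A y^{m-1})_i = (A^J_r x^{m-1})_i` for `i ∈ J`; and `y_i (A y^{m-1})_i = 0`
for `i ∉ J`. Hence the sign condition for the sub-tensor at `x` is the sign condition for `A`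
at `y`, and column adequacy of `A` gives `A^J_r x^{m-1} = 0`.
-/

open Function

lemma prod_extend_zero_eq_zero {α ι γ M₀ : Type*} [Fintype γ] [CommMonoidWithZero M₀]
    (e : ι ↪ α) (x : ι → M₀) (g : γ → α) (hg : g ∉ Set.range e.arrowCongrRight) :
    ∏ j, extend e x 0 (g j) = 0 := by
  obtain ⟨j, hj⟩ : ∃ j, g j ∉ Set.range e := by
    by_contra! hrange
    choose h hh using hrange
    exact hg ⟨h, funext hh⟩
  exact prod_eq_zero (mem_univ j) (extend_apply' _ _ _ hj)

lemma tmul_extend_zero {n k r : ℕ} (A : Fin n → (Fin k → Fin n) → ℝ) (e : Fin r ↪ Fin n)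
    (x : Fin r → ℝ) (i : Fin r) :
    tmul A (extend e x 0) (e i) = tmul (fun i f => A (e i) (fun j => e (f j))) x i := by
  have hsub : ∑ f ∈ univ.map e.arrowCongrRight, A (e i) f * ∏ j, extend e x 0 (f j)
      = tmul A (extend e x 0) (e i) := by
    refine sum_subset (subset_univ _) fun f _ hf => ?_
    rw [prod_extend_zero_eq_zero e x f (by simpa using hf), mul_zero]
  rw [← hsub, sum_map]
  simp only [Embedding.arrowCongrRight_apply, Function.comp_apply, e.injective.extend_apply]
  rfl

/-- The principal sub-tensor for `J = range e` is indexed through the enumeration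
`e : Fin r ↪ Fin n` of `J`. -/
theorem principal_subtensor_column_adequate {n k r : ℕ} (A : Fin n → (Fin k → Fin n) → ℝ)
    (h : ColumnAdequate A) (e : Fin r ↪ Fin n) :
    ColumnAdequate (fun i f => A (e i) (fun j => e (f j))) := by
  intro x hx
  have hsign : ∀ j, extend e x 0 j * tmul A (extend e x 0) j ≤ 0 := by
    intro j
    by_cases hj : ∃ i, e i = j
    · obtain ⟨i, rfl⟩ := hj
      rw [e.injective.extend_apply, tmul_extend_zero]
      exact hx i
    · rw [extend_apply' _ _ _ hj, Pi.zero_apply, zero_mul]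
  intro i
  rw [← tmul_extend_zero]
  exact h _ hsign (e i)
end

section
/- Let A be a tensor of order m and dimension n, and let P = diag(p_1,...,p_n), Q = diag(q_1,...,q_n) be diagonal matrices with p_i q_i > 0 for all i. Then A is column adequate if and only if the tensor P·A·Q (with entries b_{i1 i2...im} = p_{i1} a_{i1 i2...im} q_{i2}...q_{im}) is column adequate. -/
open Finset Matrix

/-- The tensor `P·A·Q` for `P = diag(p)`, `Q = diag(q)`. -/
def diagMul {n k : ℕ} (p q : Fin n → ℝ) (A : Fin n → (Fin k → Fin n) → ℝ) :
    Fin n → (Fin k → Fin n) → ℝ :=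
  fun i f => p i * A i f * ∏ j, q (f j)

section diagMul

variable {n k : ℕ} {A : Fin n → (Fin k → Fin n) → ℝ} {p q : Fin n → ℝ}

lemma tmul_diagMul (x : Fin n → ℝ) (i : Fin n) :
    tmul (diagMul p q A) x i = p i * tmul A (q * x) i := by
  simp only [tmul, diagMul, Pi.mul_apply, prod_mul_distrib, mul_sum]
  exact sum_congr rfl fun _ _ => by ring

lemma diagMul_inv_diagMul (hp : ∀ i, p i ≠ 0) (hq : ∀ i, q i ≠ 0) :
    diagMul p⁻¹ q⁻¹ (diagMul p q A) = A := by
  funext i f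
  have hpi := hp i
  have hqf : ∏ j, q (f j) ≠ 0 := prod_ne_zero_iff.mpr fun j _ => hq (f j)
  simp only [diagMul, Pi.inv_apply, prod_inv_distrib]
  field_simp

/-- With `y = q * x`, `x_i (PAQ x^k)_i` and `y_i (A y^k)_i` differ by the positive factor
`p_i q_i / q_i²`, so the sign conditions of column adequacy correspond. -/
lemma columnAdequate_diagMul (hA : ColumnAdequate A) (hpq : ∀ i, 0 < p i * q i) :
    ColumnAdequate (diagMul p q A) := by
  intro x hx i
  have hy : ∀ i, (q * x) i * tmul A (q * x) i ≤ 0 := fun i => by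
    have key : (p i * q i) * ((q * x) i * tmul A (q * x) i)
        = q i ^ 2 * (x i * tmul (diagMul p q A) x i) := by
      rw [tmul_diagMul, Pi.mul_apply]; ring
    exact nonpos_of_mul_nonpos_right
      (key ▸ mul_nonpos_of_nonneg_of_nonpos (sq_nonneg _) (hx i)) (hpq i)
  rw [tmul_diagMul, hA _ hy i, mul_zero]

end diagMul

/-- For diagonal matrices `P = diag(p)`, `Q = diag(q)` with `p_i q_i > 0`,
`A` is column adequate iff `P·A·Q` is column adequate. -/
theorem column_adequate_iff_PAQ {n k : ℕ} (A : Fin n → (Fin k → Fin n) → ℝ)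
    (p q : Fin n → ℝ) (hpq : ∀ i, 0 < p i * q i) :
    ColumnAdequate A ↔
      ColumnAdequate (fun i f => p i * A i f * ∏ j, q (f j)) := by
  refine ⟨fun hA => columnAdequate_diagMul hA hpq, fun hB => ?_⟩
  have hp : ∀ i, p i ≠ 0 := fun i => left_ne_zero_of_mul (hpq i).ne'
  have hq : ∀ i, q i ≠ 0 := fun i => right_ne_zero_of_mul (hpq i).ne'
  have hpq_inv : ∀ i, 0 < p⁻¹ i * q⁻¹ i := fun i => by
    simpa only [Pi.inv_apply, mul_inv] using inv_pos.mpr (hpq i)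
  simpa only [diagMul_inv_diagMul hp hq] using
    columnAdequate_diagMul (A := diagMul p q A) hB hpq_inv
end

section
/- Every column adequate tensor is a P_0-tensor. -/
open Finset Matrix

theorem exists_ne_zero_and_mul_nonneg {ι R : Type*} [MulZeroClass R] [LinearOrder R]
    {x y : ι → R} (hx : x ≠ 0)
    (h : (∀ i, x i * y i ≤ 0) → ∀ i, y i = 0) : ∃ i, x i ≠ 0 ∧ 0 ≤ x i * y i := by
  by_contra! hneg
  have hle : ∀ i, x i * y i ≤ 0 := fun i => by
    by_cases hxi : x i = 0
    · rw [hxi, zero_mul]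
    · exact (hneg i hxi).le
  obtain ⟨i, hi⟩ := Function.ne_iff.mp hx
  have hlt := hneg i hi
  rw [h hle i, mul_zero] at hlt
  exact lt_irrefl 0 hlt

/-- Every column adequate tensor is a `P₀`-tensor. -/
theorem column_adequate_is_P0 {n k : ℕ} (A : Fin n → (Fin k → Fin n) → ℝ)
    (h : ColumnAdequate A) :
    ∀ x : Fin n → ℝ, x ≠ 0 → ∃ i, x i ≠ 0 ∧ 0 ≤ x i * tmul A x i :=
  fun x hx => exists_ne_zero_and_mul_nonneg hx (h x)
end

section
/- Let A be a row diagonal tensor of even order m and dimension n. Then A is a column adequate tensor if and only if its majorization matrix M(A) is a column adequate matrix. -/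
open Finset Matrix

/-- A tensor is row diagonal if `a_{i i2...im}` can be nonzero only when `i2 = ... = im`. -/
def RowDiagonal {n k : ℕ} (A : Fin n → (Fin k → Fin n) → ℝ) : Prop :=
  ∀ i f, A i f ≠ 0 → ∀ j j' : Fin k, f j = f j'

/-- The majorization matrix of a tensor: `M(A)_{ij} = a_{ijj...j}`. -/
def majorization {n k : ℕ} (A : Fin n → (Fin k → Fin n) → ℝ) : Matrix (Fin n) (Fin n) ℝ :=
  fun i j => A i (fun _ => j)

/-- A square matrix `M` (over any finite index type) is column adequate if
`z_i (Mz)_i ≤ 0` for all `i` implies `Mz = 0`. -/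
def MatrixColumnAdequate {ι : Type*} [Fintype ι] (M : Matrix ι ι ℝ) : Prop :=
  ∀ z : ι → ℝ, (∀ i, z i * M.mulVec z i ≤ 0) → M.mulVec z = 0

/-!
For a row diagonal tensor only the constant index tuples contribute to `A x^{m-1}`, so
`A x^{m-1} = M(A) x^{[m-1]}`. Since `m - 1` is odd, `x ↦ x^{[m-1]}` is a bijection of `ℝⁿ`
which preserves the sign of every coordinate; hence the sign conditions `x_i (A x^{m-1})_i ≤ 0`
and `z_i (M(A) z)_i ≤ 0` correspond to each other under `z = x^{[m-1]}`.
-/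

theorem Odd.pow_mul_nonpos_iff {R : Type*} [Ring R] [LinearOrder R] [IsStrictOrderedRing R]
    {k : ℕ} (hk : Odd k) {a b : R} : a ^ k * b ≤ 0 ↔ a * b ≤ 0 := by
  rw [mul_nonpos_iff, mul_nonpos_iff, hk.pow_nonneg_iff, hk.pow_nonpos_iff]

theorem Real.surjective_pow_of_odd {k : ℕ} (hk : Odd k) :
    Function.Surjective fun x : ℝ => x ^ k := by
  have hk0 : k ≠ 0 := by rintro rfl; simp at hk
  intro z
  rcases le_total 0 z with hz | hz
  · exact ⟨z ^ (k : ℝ)⁻¹, Real.rpow_inv_natCast_pow hz hk0⟩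
  · refine ⟨-(-z) ^ (k : ℝ)⁻¹, ?_⟩
    simp only
    rw [hk.neg_pow, Real.rpow_inv_natCast_pow (neg_nonneg.2 hz) hk0, neg_neg]

theorem matrixColumnAdequate_iff_forall_pow {ι : Type*} [Fintype ι] {k : ℕ} (hk : Odd k)
    (M : Matrix ι ι ℝ) :
    MatrixColumnAdequate M ↔ ∀ x : ι → ℝ,
      (∀ i, x i * (M *ᵥ fun j => x j ^ k) i ≤ 0) → (M *ᵥ fun j => x j ^ k) = 0 := by
  constructor
  · intro hM x hx
    exact hM _ fun i => hk.pow_mul_nonpos_iff.2 (hx i)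
  · intro h z hz
    choose x hx using fun i => Real.surjective_pow_of_odd hk (z i)
    obtain rfl : (fun j => x j ^ k) = z := funext hx
    exact h x fun i => hk.pow_mul_nonpos_iff.1 (hz i)

theorem RowDiagonal.tmul_eq_mulVec {n k : ℕ} (hk : k ≠ 0) {A : Fin n → (Fin k → Fin n) → ℝ}
    (hA : RowDiagonal A) (x : Fin n → ℝ) :
    tmul A x = majorization A *ᵥ fun j => x j ^ k := by
  have : Nonempty (Fin k) := ⟨⟨0, Nat.pos_of_ne_zero hk⟩⟩
  let j₀ : Fin k := Classical.arbitrary _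
  let const : Fin n → Fin k → Fin n := fun j _ => j
  have hconst : Function.Injective const := fun a b h => congrFun h j₀
  have hsupport : ∀ i, ∀ f ∉ univ.image const, A i f * ∏ j, x (f j) = 0 := by
    intro i f hf
    suffices A i f = 0 by rw [this, zero_mul]
    by_contra h
    exact hf (mem_image.2 ⟨f j₀, mem_univ _, funext fun j => hA i f h j₀ j⟩)
  funext i
  rw [tmul, ← sum_subset (subset_univ _) fun f _ => hsupport i f,
    sum_image fun a _ b _ h => hconst h]
  simp [const, majorization, mulVec, dotProduct, prod_const]

/-- A row diagonal tensor of even order is column adequate iff its majorization matrix is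
a column adequate matrix. -/
theorem row_diagonal_column_adequate_iff {m n : ℕ} (hm : Even m) (hm2 : 2 ≤ m)
    (A : Fin n → (Fin (m - 1) → Fin n) → ℝ) (hA : RowDiagonal A) :
    ColumnAdequate A ↔ MatrixColumnAdequate (majorization A) := by
  have hodd : Odd (m - 1) := Nat.Even.sub_odd (by omega) hm odd_one
  rw [matrixColumnAdequate_iff_forall_pow hodd, ColumnAdequate]
  simp only [hA.tmul_eq_mulVec hodd.pos.ne', funext_iff, Pi.zero_apply]
end

section
/- Let A be a tensor of order m and dimension n, with the block matrix Ā = [[M(A), B],[O, O]] of size N×N (N ≥ n, B of size n×(N-n)). Then Ā is a column adequate matrix if and only if M(A) is a column adequate matrix and B = O. -/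
open Finset Matrix

/-!
Test vectors supported on one block decouple the condition: a vector `(x, 0)` shows that the
leading principal block inherits column adequacy, and a vector `(0, y)` makes every product
`z_i (Āz)_i` vanish, so column adequacy forces `B y = 0` for all `y`. Conversely, for a
block-diagonal matrix the hypothesis on `z = (x, y)` splits into the hypotheses on `x` and `y`.
-/

namespace MatrixColumnAdequate

variable {ι κ : Type*} [Fintype ι] [Fintype κ]

theorem zero : MatrixColumnAdequate (0 : Matrix ι ι ℝ) :=
  fun z _ => zero_mulVec z

theorem of_fromBlocks {M : Matrix ι ι ℝ} {B : Matrix ι κ ℝ} {C : Matrix κ ι ℝ}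
    {D : Matrix κ κ ℝ} (h : MatrixColumnAdequate (fromBlocks M B C D)) :
    MatrixColumnAdequate M := by
  intro x hx
  have h₀ := h (Sum.elim x 0) <| by
    rintro (i | j)
    · simpa [fromBlocks_mulVec] using hx i
    · simp
  funext i
  simpa [fromBlocks_mulVec] using congrFun h₀ (Sum.inl i)

theorem fromBlocks_topRight_eq_zero {M : Matrix ι ι ℝ} {B : Matrix ι κ ℝ}
    {C : Matrix κ ι ℝ} (h : MatrixColumnAdequate (fromBlocks M B C 0)) : B = 0 := by
  refine ext_iff_mulVec.mpr fun y => ?_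
  have h₀ := h (Sum.elim 0 y) <| by
    rintro (i | j) <;> simp [fromBlocks_mulVec]
  funext i
  simpa [fromBlocks_mulVec] using congrFun h₀ (Sum.inl i)

theorem fromBlocks_diagonal {M : Matrix ι ι ℝ} {D : Matrix κ κ ℝ}
    (hM : MatrixColumnAdequate M) (hD : MatrixColumnAdequate D) :
    MatrixColumnAdequate (fromBlocks M 0 0 D) := by
  intro z hz
  have hx := hM (z ∘ Sum.inl) fun i => by simpa [fromBlocks_mulVec] using hz (Sum.inl i)
  have hy := hD (z ∘ Sum.inr) fun j => by simpa [fromBlocks_mulVec] using hz (Sum.inr j)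
  funext k
  rcases k with i | j
  · simpa [fromBlocks_mulVec] using congrFun hx i
  · simpa [fromBlocks_mulVec] using congrFun hy j

end MatrixColumnAdequate

/-- The block matrix `Ā = [[M, B],[O, O]]` of size `N × N` (with `N = n + p`) is column
adequate iff `M` is column adequate and `B = O`. -/
theorem block_matrix_column_adequate_iff {n p : ℕ}
    (M : Matrix (Fin n) (Fin n) ℝ) (B : Matrix (Fin n) (Fin p) ℝ) :
    MatrixColumnAdequate (Matrix.fromBlocks M B 0 0) ↔
      MatrixColumnAdequate M ∧ B = 0 :=
  ⟨fun h => ⟨h.of_fromBlocks, h.fromBlocks_topRight_eq_zero⟩,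
    fun ⟨hM, hB⟩ => hB ▸ hM.fromBlocks_diagonal MatrixColumnAdequate.zero⟩
end

section
/- Let A be a tensor of even order m and dimension n such that the auxiliary matrix Ā has the block form [[M(A), O],[O, O]], i.e., A x^{m-1} = M(A) x^{[m-1]} for all x. If M(A) is a column adequate matrix, then A is a column adequate tensor. -/
open Finset Matrix

lemma pow_mul_nonpos_of_mul_nonpos {R : Type*} [CommRing R] [LinearOrder R] [IsStrictOrderedRing R]
    {x a : R} {k : ℕ} (hk : Odd k) (h : x * a ≤ 0) : x ^ k * a ≤ 0 := by
  obtain ⟨j, rfl⟩ := hk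
  have hsq : x ^ (2 * j + 1) * a = (x ^ j) ^ 2 * (x * a) := by ring
  rw [hsq]
  exact mul_nonpos_of_nonneg_of_nonpos (sq_nonneg _) h

lemma MatrixColumnAdequate.mulVec_odd_pow_eq_zero {ι : Type*} [Fintype ι] {M : Matrix ι ι ℝ}
    (hM : MatrixColumnAdequate M) {k : ℕ} (hk : Odd k) {x : ι → ℝ}
    (hx : ∀ i, x i * M.mulVec (fun j => x j ^ k) i ≤ 0) :
    M.mulVec (fun j => x j ^ k) = 0 :=
  hM _ fun i => pow_mul_nonpos_of_mul_nonpos hk (hx i)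

/-- If `m` is even, `A x^{m-1} = M(A) x^{[m-1]}` for all `x` (the auxiliary matrix has the
block form `[[M(A), O],[O, O]]`), and `M(A)` is a column adequate matrix, then `A` is a
column adequate tensor. -/
theorem majorization_adequate_implies_tensor_adequate {m n : ℕ} (hm : Even m) (hm2 : 2 ≤ m)
    (A : Fin n → (Fin (m - 1) → Fin n) → ℝ)
    (hblock : ∀ x : Fin n → ℝ, ∀ i,
      tmul A x i = (majorization A).mulVec (fun j => x j ^ (m - 1)) i)
    (hM : MatrixColumnAdequate (majorization A)) :
    ColumnAdequate A := by
  intro x hx i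
  have hodd : Odd (m - 1) := Nat.Even.sub_odd (by omega) hm odd_one
  simp only [hblock] at hx ⊢
  rw [hM.mulVec_odd_pow_eq_zero hodd hx, Pi.zero_apply]
end

section
/- Let A be a row diagonal tensor of even order m and dimension n such that M(A) is a column adequate matrix. Then the tensor complementarity problem TCP(q, A) has a unique ω-solution for every q in R^n: if x and x' are both solutions of TCP(q, A), then A x^{m-1} + q = A (x')^{m-1} + q. -/
/-!
Row diagonality gives `A x^{m-1} = M(A) x^{[m-1]}`, so `x ↦ x^{[m-1]}` sends solutions of
`TCP(q, A)` to solutions of `LCP(q, M(A))` with the same `ω`. For two LCP solutions `z, z'` with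
`w = M z + q`, `w' = M z' + q`, complementarity gives
`(z - z')_i (M (z - z'))_i = -(z_i w'_i + z'_i w_i) ≤ 0`, so column adequacy forces `M z = M z'`.
-/

open Finset Matrix

def IsLCPSolution {ι : Type*} [Fintype ι] (M : Matrix ι ι ℝ) (q z : ι → ℝ) : Prop :=
  0 ≤ z ∧ 0 ≤ M *ᵥ z + q ∧ ∀ i, z i * (M *ᵥ z + q) i = 0

theorem MatrixColumnAdequate.mulVec_eq_of_isLCPSolution {ι : Type*} [Fintype ι]
    {M : Matrix ι ι ℝ} (hM : MatrixColumnAdequate M) {q z z' : ι → ℝ}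
    (hz : IsLCPSolution M q z) (hz' : IsLCPSolution M q z') :
    M *ᵥ z = M *ᵥ z' := by
  obtain ⟨hz0, hw, hc⟩ := hz
  obtain ⟨hz0', hw', hc'⟩ := hz'
  rw [← sub_eq_zero, ← mulVec_sub]
  refine hM _ fun i => ?_
  have hcross : 0 ≤ z i * (M *ᵥ z' + q) i + z' i * (M *ᵥ z + q) i :=
    add_nonneg (mul_nonneg (hz0 i) (hw' i)) (mul_nonneg (hz0' i) (hw i))
  have hexpand : (z - z') i * (M *ᵥ (z - z')) i
      = -(z i * (M *ᵥ z' + q) i + z' i * (M *ᵥ z + q) i) := by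
    simp only [mulVec_sub, Pi.sub_apply, Pi.add_apply] at hc hc' ⊢
    linear_combination hc i + hc' i
  linarith

theorem tmul_eq_mulVec_pow {n k : ℕ} (hk : 0 < k) {A : Fin n → (Fin k → Fin n) → ℝ}
    (hA : RowDiagonal A) (x : Fin n → ℝ) :
    tmul A x = majorization A *ᵥ x ^ k := by
  ext i
  let const : Fin n ↪ (Fin k → Fin n) := ⟨fun j _ => j, fun _ _ h => congrFun h ⟨0, hk⟩⟩
  rw [tmul, ← sum_subset (subset_univ (univ.map const)), sum_map]
  · change ∑ j, A i (fun _ => j) * ∏ _ : Fin k, x j = _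
    simp [mulVec, dotProduct, majorization]
  · intro f _ hf
    refine mul_eq_zero_of_left (not_not.1 fun hAf => hf ?_) _
    exact mem_map.2 ⟨f ⟨0, hk⟩, mem_univ _, funext fun j => hA i f hAf _ _⟩

theorem isLCPSolution_pow {n k : ℕ} (hk : 0 < k) {A : Fin n → (Fin k → Fin n) → ℝ}
    (hA : RowDiagonal A) {q x : Fin n → ℝ} (hx : 0 ≤ x) (hw : ∀ i, 0 ≤ tmul A x i + q i)
    (hc : ∑ i, x i * (tmul A x i + q i) = 0) :
    IsLCPSolution (majorization A) q (x ^ k) := by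
  rw [IsLCPSolution, ← tmul_eq_mulVec_pow hk hA]
  refine ⟨fun i => pow_nonneg (hx i) k, hw, fun i => ?_⟩
  have hci : x i * (tmul A x i + q i) = 0 :=
    (sum_eq_zero_iff_of_nonneg fun j _ => mul_nonneg (hx j) (hw j)).1 hc i (mem_univ i)
  obtain ⟨k, rfl⟩ := Nat.exists_eq_succ_of_ne_zero hk.ne'
  simp only [Pi.pow_apply, Pi.add_apply, pow_succ, mul_assoc, hci, mul_zero]

theorem tcp_omega_unique_general {m n : ℕ} (hm2 : 2 ≤ m)
    (A : Fin n → (Fin (m - 1) → Fin n) → ℝ) (hA : RowDiagonal A)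
    (hM : MatrixColumnAdequate (majorization A)) :
    ∀ q x x' : Fin n → ℝ,
      (0 ≤ x ∧ (∀ i, 0 ≤ tmul A x i + q i) ∧ ∑ i, x i * (tmul A x i + q i) = 0) →
      (0 ≤ x' ∧ (∀ i, 0 ≤ tmul A x' i + q i) ∧ ∑ i, x' i * (tmul A x' i + q i) = 0) →
      ∀ i, tmul A x i + q i = tmul A x' i + q i := by
  intro q x x' ⟨hx, hw, hc⟩ ⟨hx', hw', hc'⟩ i
  have hk : 0 < m - 1 := by omega
  have hMeq := hM.mulVec_eq_of_isLCPSolution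
    (isLCPSolution_pow hk hA hx hw hc) (isLCPSolution_pow hk hA hx' hw' hc')
  rw [tmul_eq_mulVec_pow hk hA x, tmul_eq_mulVec_pow hk hA x', hMeq]

/-- For a row diagonal tensor `A` of even order whose majorization matrix is column adequate,
the tensor complementarity problem `TCP(q, A)` has a unique `ω`-solution for every `q`. -/
theorem tcp_omega_unique {m n : ℕ} (hm : Even m) (hm2 : 2 ≤ m)
    (A : Fin n → (Fin (m - 1) → Fin n) → ℝ) (hA : RowDiagonal A)
    (hM : MatrixColumnAdequate (majorization A)) :
    ∀ q x x' : Fin n → ℝ,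
      (0 ≤ x ∧ (∀ i, 0 ≤ tmul A x i + q i) ∧ ∑ i, x i * (tmul A x i + q i) = 0) →
      (0 ≤ x' ∧ (∀ i, 0 ≤ tmul A x' i + q i) ∧ ∑ i, x' i * (tmul A x' i + q i) = 0) →
      ∀ i, tmul A x i + q i = tmul A x' i + q i :=
  tcp_omega_unique_general hm2 A hA hM
end
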